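/- Let V be a Q(q)-vector space, L₀ an A₀-lattice, L_∞ an A_∞-lattice, and V_A an A-lattice (A₀ = rational functions regular at 0, A_∞ = regular at ∞, A = Q[q,q^{-1}]), each generating V over Q(q), and set E = L₀ ∩ L_∞ ∩ V_A. Then the natural map E → L₀/qL₀ is an isomorphism of Q-vector spaces if and only if the natural map E → L_∞/q^{-1}L_∞ is an isomorphism. -/
import Mathlib

noncomputable section

/-- The field `ℚ(q)`. -/
abbrev Kq : Type := RatFunc ℚ

/-- The indeterminate `q`. -/
def qv : Kq := RatFunc.X

/-- `A₀ = {f ∈ ℚ(q) : f is regular at q = 0}`. -/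
def A0 : Set Kq :=
  {x | ∃ p r : Polynomial ℚ, r.eval 0 ≠ 0 ∧
    x * algebraMap (Polynomial ℚ) Kq r = algebraMap (Polynomial ℚ) Kq p}

/-- `A_∞ = {f ∈ ℚ(q) : f is regular at q = ∞}`. -/
def Ainf : Set Kq :=
  {x | ∃ p r : Polynomial ℚ, r ≠ 0 ∧ p.degree ≤ r.degree ∧
    x * algebraMap (Polynomial ℚ) Kq r = algebraMap (Polynomial ℚ) Kq p}

/-- `A = ℚ[q, q⁻¹]`. -/
def AA : Set Kq :=
  {x | ∃ (p : Polynomial ℚ) (n : ℕ),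
    x * RatFunc.X ^ n = algebraMap (Polynomial ℚ) Kq p}

open Polynomial

/-! ### Auxiliary lemmas -/

def amap : Polynomial ℚ →+* Kq := algebraMap (Polynomial ℚ) Kq

lemma qv_eq : qv = amap Polynomial.X := (RatFunc.algebraMap_X).symm
lemma qv_ne : qv ≠ 0 := RatFunc.X_ne_zero
lemma amap_ne {p : Polynomial ℚ} (hp : p ≠ 0) : amap p ≠ 0 := RatFunc.algebraMap_ne_zero hp

lemma mem_A0 {x : Kq} (p r : Polynomial ℚ) (hr : r.eval 0 ≠ 0)
    (h : x * amap r = amap p) : x ∈ A0 := ⟨p, r, hr, h⟩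
lemma mem_Ainf {x : Kq} (p r : Polynomial ℚ) (hr : r ≠ 0) (hd : p.degree ≤ r.degree)
    (h : x * amap r = amap p) : x ∈ Ainf := ⟨p, r, hr, hd, h⟩
lemma mem_AA {x : Kq} (p : Polynomial ℚ) (n : ℕ) (h : x * qv ^ n = amap p) : x ∈ AA :=
  ⟨p, n, h⟩

lemma poly_mem_A0 (p : Polynomial ℚ) : amap p ∈ A0 :=
  mem_A0 p 1 (by simp) (by simp)
lemma poly_mem_AA (p : Polynomial ℚ) : amap p ∈ AA :=
  mem_AA p 0 (by simp)
lemma qv_pow_mem_A0 (n : ℕ) : qv ^ n ∈ A0 := by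
  rw [qv_eq, ← map_pow]; exact poly_mem_A0 _
lemma qv_pow_mem_AA (n : ℕ) : qv ^ n ∈ AA := by
  rw [qv_eq, ← map_pow]; exact poly_mem_AA _
lemma qv_inv_pow_mem_AA (n : ℕ) : (qv⁻¹) ^ n ∈ AA :=
  mem_AA 1 n (by rw [← mul_pow, inv_mul_cancel₀ qv_ne, one_pow, map_one])
lemma qv_inv_pow_mem_Ainf (n : ℕ) : (qv⁻¹) ^ n ∈ Ainf :=
  mem_Ainf 1 (X ^ n) (pow_ne_zero _ X_ne_zero)
    (by simp [degree_one, degree_X_pow])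
    (by rw [map_pow, ← qv_eq, ← mul_pow, inv_mul_cancel₀ qv_ne, one_pow, map_one])

def Pc (γ : ℚ) : Kq := amap (Polynomial.C γ)
lemma Pc_mem_A0 (γ : ℚ) : Pc γ ∈ A0 := poly_mem_A0 _
lemma Pc_mem_AA (γ : ℚ) : Pc γ ∈ AA := poly_mem_AA _
lemma Pc_mem_Ainf (γ : ℚ) : Pc γ ∈ Ainf :=
  mem_Ainf (Polynomial.C γ) 1 one_ne_zero (by simpa using degree_C_le) (by simp [Pc])
lemma Pc_neg_one : Pc (-1) = -1 := by simp [Pc]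

lemma hnum (a : Kq) : a * amap a.denom = amap a.num := by
  nth_rewrite 1 [← RatFunc.num_div_denom a]
  exact div_mul_cancel₀ _ (RatFunc.algebraMap_ne_zero a.denom_ne_zero)

lemma scalar_A0 (a : Kq) : ∃ k : ℕ, qv ^ k * a ∈ A0 := by
  set dnm := a.denom with hdnm
  have hd : dnm ≠ 0 := a.denom_ne_zero
  set e := rootMultiplicity 0 dnm with he
  set c := dnm /ₘ (X - Polynomial.C 0) ^ e with hc
  have hmul : (X - Polynomial.C 0) ^ e * c = dnm := pow_mul_divByMonic_rootMultiplicity_eq dnm 0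
  have hc0 : c.eval 0 ≠ 0 := eval_divByMonic_pow_rootMultiplicity_ne_zero 0 hd
  have hXe : (X : Polynomial ℚ) ^ e * c = dnm := by simpa using hmul
  refine ⟨e, mem_A0 a.num c hc0 ?_⟩
  have h2 : amap dnm = qv ^ e * amap c := by
    rw [← hXe, map_mul, map_pow, qv_eq]
  have h3 := hnum a
  rw [← hdnm] at h3
  rw [← h3, h2]; ring

lemma scalar_Ainf (a : Kq) : ∃ k : ℕ, (qv⁻¹) ^ k * a ∈ Ainf := by
  refine ⟨a.num.natDegree, mem_Ainf a.num (X ^ a.num.natDegree * a.denom)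
    (mul_ne_zero (pow_ne_zero _ X_ne_zero) a.denom_ne_zero) ?_ ?_⟩
  · rw [degree_mul, degree_X_pow]
    calc a.num.degree ≤ (a.num.natDegree : WithBot ℕ) := degree_le_natDegree
      _ ≤ (a.num.natDegree : WithBot ℕ) + a.denom.degree := by
          refine le_add_of_nonneg_right ?_
          exact zero_le_degree_iff.mpr a.denom_ne_zero
  · rw [map_mul, map_pow, ← qv_eq]
    calc (qv⁻¹) ^ a.num.natDegree * a * (qv ^ a.num.natDegree * amap a.denom)
        = ((qv⁻¹) ^ a.num.natDegree * qv ^ a.num.natDegree) * (a * amap a.denom) := by ring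
      _ = amap a.num := by
          rw [← mul_pow, inv_mul_cancel₀ qv_ne, one_pow, one_mul, hnum]

lemma scalar_AA (a : Kq) : ∃ r : Polynomial ℚ, r ≠ 0 ∧ amap r * a ∈ AA :=
  ⟨a.denom, a.denom_ne_zero, mem_AA a.num 0 (by rw [pow_zero, mul_one, mul_comm, hnum])⟩

lemma ratio_mem_Ainf (r : Polynomial ℚ) : (qv⁻¹) ^ r.natDegree * amap r ∈ Ainf := by
  refine mem_Ainf r (X ^ r.natDegree) (pow_ne_zero _ X_ne_zero)
    (by rw [degree_X_pow]; exact degree_le_natDegree) ?_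
  rw [map_pow, ← qv_eq]
  calc (qv⁻¹) ^ r.natDegree * amap r * qv ^ r.natDegree
      = ((qv⁻¹) ^ r.natDegree * qv ^ r.natDegree) * amap r := by ring
    _ = amap r := by rw [← mul_pow, inv_mul_cancel₀ qv_ne, one_pow, one_mul]

lemma deg_aux (r : Polynomial ℚ) (hr : r ≠ 0) :
    (X * (X ^ r.natDegree - Polynomial.C r.leadingCoeff⁻¹ * r)).degree ≤ r.degree := by
  set d := r.natDegree with hd
  set γ := r.leadingCoeff⁻¹ with hγdef
  have hγ : γ ≠ 0 := inv_ne_zero (leadingCoeff_ne_zero.mpr hr)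
  set s := X ^ d - Polynomial.C γ * r with hs
  by_cases hs0 : s = 0
  · rw [hs0, mul_zero, degree_zero]; exact bot_le
  · have hdeq : (X ^ d : Polynomial ℚ).degree = (Polynomial.C γ * r).degree := by
      rw [degree_X_pow, degree_mul, degree_C hγ, zero_add, degree_eq_natDegree hr]
    have hlc : (X ^ d : Polynomial ℚ).leadingCoeff = (Polynomial.C γ * r).leadingCoeff := by
      rw [leadingCoeff_X_pow, leadingCoeff_mul, leadingCoeff_C, hγdef,
        inv_mul_cancel₀ (leadingCoeff_ne_zero.mpr hr)]
    have hlt : s.degree < (X ^ d : Polynomial ℚ).degree :=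
      degree_sub_lt hdeq (pow_ne_zero _ X_ne_zero) hlc
    rw [degree_X_pow] at hlt
    have hlt' : s.natDegree < d := by
      rwa [degree_eq_natDegree hs0, Nat.cast_lt] at hlt
    rw [degree_mul, degree_X, degree_eq_natDegree hs0, degree_eq_natDegree hr, ← hd]
    calc (1 : WithBot ℕ) + s.natDegree = ((1 + s.natDegree : ℕ) : WithBot ℕ) := by push_cast; ring
      _ ≤ (d : WithBot ℕ) := by exact_mod_cast by omega

section Modules
variable {V : Type*} [AddCommGroup V] [Module Kq V]

lemma sum_mem_set (S : Set V) (h0 : (0 : V) ∈ S)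
    (hadd : ∀ v ∈ S, ∀ w ∈ S, v + w ∈ S) {ι : Type*} (s : Finset ι) (g : ι → V)
    (hg : ∀ i ∈ s, g i ∈ S) : (∑ i ∈ s, g i) ∈ S :=
  Finset.sum_induction g (· ∈ S) (fun a b ha hb => hadd a ha b hb) h0 hg

lemma clear_pow (T : Set Kq) (t : Kq)
    (htpow : ∀ k : ℕ, t ^ k ∈ T)
    (hscal : ∀ a : Kq, ∃ k : ℕ, t ^ k * a ∈ T)
    (S : Set V)
    (hSzero : (0 : V) ∈ S)
    (hSadd : ∀ v ∈ S, ∀ w ∈ S, v + w ∈ S)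
    (hSsmul : ∀ a ∈ T, ∀ v ∈ S, a • v ∈ S)
    (hspan : Submodule.span Kq S = ⊤)
    (x : V) : ∃ m : ℕ, t ^ m • x ∈ S := by
  have hx : x ∈ Submodule.span Kq S := by rw [hspan]; trivial
  induction hx using Submodule.span_induction with
  | mem v hv => exact ⟨0, by simpa using hv⟩
  | zero => exact ⟨0, by simpa using hSzero⟩
  | add v w _ _ ihv ihw =>
    obtain ⟨m₁, h₁⟩ := ihv
    obtain ⟨m₂, h₂⟩ := ihw
    refine ⟨m₁ + m₂, ?_⟩
    have h3 : t ^ (m₁ + m₂) • (v + w) = t ^ m₂ • (t ^ m₁ • v) + t ^ m₁ • (t ^ m₂ • w) := by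
      rw [smul_add, smul_smul, smul_smul, ← pow_add, ← pow_add, add_comm m₂ m₁]
    rw [h3]
    exact hSadd _ (hSsmul _ (htpow m₂) _ h₁) _ (hSsmul _ (htpow m₁) _ h₂)
  | smul a v _ ihv =>
    obtain ⟨m, hm⟩ := ihv
    obtain ⟨k, hk⟩ := hscal a
    refine ⟨k + m, ?_⟩
    have h3 : t ^ (k + m) • (a • v) = (t ^ k * a) • (t ^ m • v) := by
      rw [smul_smul, smul_smul, pow_add]; ring_nf
    rw [h3]
    exact hSsmul _ hk _ hm

lemma clearA (LA : Set V)
    (hLAzero : (0 : V) ∈ LA)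
    (hLAadd : ∀ v ∈ LA, ∀ w ∈ LA, v + w ∈ LA)
    (hLAsmul : ∀ a ∈ AA, ∀ v ∈ LA, a • v ∈ LA)
    (hspanA : Submodule.span Kq LA = ⊤)
    (x : V) : ∃ r : Polynomial ℚ, r ≠ 0 ∧ amap r • x ∈ LA := by
  have hx : x ∈ Submodule.span Kq LA := by rw [hspanA]; trivial
  induction hx using Submodule.span_induction with
  | mem v hv => exact ⟨1, one_ne_zero, by simpa using hv⟩
  | zero => exact ⟨1, one_ne_zero, by simpa using hLAzero⟩
  | add v w _ _ ihv ihw =>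
    obtain ⟨r₁, hr₁, h₁⟩ := ihv
    obtain ⟨r₂, hr₂, h₂⟩ := ihw
    refine ⟨r₁ * r₂, mul_ne_zero hr₁ hr₂, ?_⟩
    have h3 : amap (r₁ * r₂) • (v + w)
        = amap r₂ • (amap r₁ • v) + amap r₁ • (amap r₂ • w) := by
      rw [smul_add, smul_smul, smul_smul, ← map_mul, ← map_mul, mul_comm r₂ r₁]
    rw [h3]
    exact hLAadd _ (hLAsmul _ (poly_mem_AA r₂) _ h₁) _ (hLAsmul _ (poly_mem_AA r₁) _ h₂)
  | smul a v _ ihv =>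
    obtain ⟨r, hr, h⟩ := ihv
    obtain ⟨t, ht, htmem⟩ := scalar_AA a
    refine ⟨t * r, mul_ne_zero ht hr, ?_⟩
    have h3 : amap (t * r) • (a • v) = (amap t * a) • (amap r • v) := by
      rw [smul_smul, smul_smul, map_mul]; ring_nf
    rw [h3]
    exact hLAsmul _ htmem _ h

lemma stripX (LA : Set V)
    (hLAsmul : ∀ a ∈ AA, ∀ v ∈ LA, a • v ∈ LA)
    {x : V} {r : Polynomial ℚ} (hr : r ≠ 0) (h : amap r • x ∈ LA) :
    ∃ c : Polynomial ℚ, c.eval 0 ≠ 0 ∧ amap c • x ∈ LA := by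
  set e := rootMultiplicity 0 r with he
  set c := r /ₘ (X - Polynomial.C 0) ^ e with hc
  have hmul : (X - Polynomial.C 0) ^ e * c = r := pow_mul_divByMonic_rootMultiplicity_eq r 0
  have hc0 : c.eval 0 ≠ 0 := eval_divByMonic_pow_rootMultiplicity_ne_zero 0 hr
  have hXe : (X : Polynomial ℚ) ^ e * c = r := by simpa using hmul
  refine ⟨c, hc0, ?_⟩
  have hsc : amap c = (qv⁻¹) ^ e * amap r := by
    rw [← hXe, map_mul, map_pow, ← qv_eq, ← mul_assoc, ← mul_pow,
      inv_mul_cancel₀ qv_ne, one_pow, one_mul]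
  rw [hsc, mul_smul]
  exact hLAsmul _ (qv_inv_pow_mem_AA e) _ h

lemma expandGen (t : Kq) (ht : t ≠ 0)
    (P M N E : Set V)
    (hEmem : ∀ v, v ∈ P → v ∈ M → v ∈ N → v ∈ E)
    (hEM : ∀ v ∈ E, v ∈ M) (hEN : ∀ v ∈ E, v ∈ N)
    (hNadd : ∀ v ∈ N, ∀ w ∈ N, v + w ∈ N)
    (hNneg : ∀ v ∈ N, -v ∈ N)
    (hNinv : ∀ v ∈ N, t⁻¹ • v ∈ N)
    (hMadd : ∀ v ∈ M, ∀ w ∈ M, v + w ∈ M)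
    (hMneg : ∀ v ∈ M, -v ∈ M)
    (hMinvpow : ∀ (k : ℕ), ∀ v ∈ M, (t⁻¹) ^ k • v ∈ M)
    (hb : ∀ x ∈ P, ∃ e ∈ E, ∃ w ∈ P, x - e = t • w) :
    ∀ (n : ℕ) (y w : V), y ∈ P → y ∈ N → w ∈ M → y = t ^ n • w →
      ∃ f : ℕ → V, (∀ k, f k ∈ E) ∧ y = ∑ k ∈ Finset.range (n + 1), t ^ k • f k := by
  intro n
  induction n with
  | zero =>
    intro y w hyP hyN hwM hyw
    have hyweq : y = w := by simpa using hyw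
    refine ⟨fun _ => y, fun k => hEmem y hyP (by rw [hyweq]; exact hwM) hyN, ?_⟩
    simp
  | succ n ih =>
    intro y w hyP hyN hwM hyw
    obtain ⟨e, he, w₀, hw₀P, heq⟩ := hb y hyP
    have heN : e ∈ N := hEN e he
    have heM : e ∈ M := hEM e he
    have hw₀eq : w₀ = t⁻¹ • (y - e) := by
      rw [heq, smul_smul, inv_mul_cancel₀ ht, one_smul]
    have hw₀N : w₀ ∈ N := by
      rw [hw₀eq, sub_eq_add_neg]
      exact hNinv _ (hNadd y hyN _ (hNneg e heN))
    have hw'M : w + (t⁻¹) ^ (n + 1) • (-e) ∈ M :=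
      hMadd _ hwM _ (hMinvpow (n + 1) _ (hMneg e heM))
    have hs1 : t⁻¹ * t ^ (n + 1) = t ^ n := by
      rw [pow_succ']
      exact inv_mul_cancel_left₀ ht _
    have hs2 : t ^ n * (t⁻¹) ^ (n + 1) = t⁻¹ := by
      rw [pow_succ, mul_comm (t⁻¹ ^ n) t⁻¹, ← mul_assoc, mul_comm (t ^ n), mul_assoc,
        ← mul_pow, mul_inv_cancel₀ ht, one_pow, mul_one]
    have hw₀w' : w₀ = t ^ n • (w + (t⁻¹) ^ (n + 1) • (-e)) := by
      rw [hw₀eq, hyw, smul_sub, smul_smul, hs1, smul_add, smul_smul, hs2, smul_neg,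
        sub_eq_add_neg]
    obtain ⟨f', hf', hsum⟩ := ih w₀ _ hw₀P hw₀N hw'M hw₀w'
    refine ⟨fun k => if k = 0 then e else f' (k - 1),
      fun k => by dsimp only; split
                  · exact he
                  · exact hf' _, ?_⟩
    have hy : y = t • w₀ + e := sub_eq_iff_eq_add.mp heq
    rw [hy, hsum, Finset.smul_sum]
    conv_rhs => rw [Finset.sum_range_succ']
    simp only [Nat.add_sub_cancel, pow_zero, one_smul, Nat.succ_ne_zero, if_false, if_true,
      reduceIte]
    congr 1
    refine Finset.sum_congr rfl fun k _ => ?_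
    rw [smul_smul, pow_succ']

lemma surj_dir1 (L0 Li LA : Set V)
    (hL0zero : (0 : V) ∈ L0) (hLizero : (0 : V) ∈ Li) (hLAzero : (0 : V) ∈ LA)
    (hL0add : ∀ v ∈ L0, ∀ w ∈ L0, v + w ∈ L0)
    (hLiadd : ∀ v ∈ Li, ∀ w ∈ Li, v + w ∈ Li)
    (hLAadd : ∀ v ∈ LA, ∀ w ∈ LA, v + w ∈ LA)
    (hL0smul : ∀ a ∈ A0, ∀ v ∈ L0, a • v ∈ L0)
    (hLismul : ∀ a ∈ Ainf, ∀ v ∈ Li, a • v ∈ Li)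
    (hLAsmul : ∀ a ∈ AA, ∀ v ∈ LA, a • v ∈ LA)
    (hspan0 : Submodule.span Kq L0 = ⊤)
    (hspanA : Submodule.span Kq LA = ⊤)
    (h1b : ∀ x ∈ L0, ∃ e ∈ L0 ∩ Li ∩ LA, ∃ w ∈ L0, x - e = qv • w) :
    ∀ x ∈ Li, ∃ e ∈ L0 ∩ Li ∩ LA, ∃ w ∈ Li, x - e = qv⁻¹ • w := by
  have negLA : ∀ v ∈ LA, -v ∈ LA := fun v hv => by
    have h := hLAsmul _ (Pc_mem_AA (-1)) v hv
    rwa [Pc_neg_one, neg_one_smul] at h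
  have negLi : ∀ v ∈ Li, -v ∈ Li := fun v hv => by
    have h := hLismul _ (Pc_mem_Ainf (-1)) v hv
    rwa [Pc_neg_one, neg_one_smul] at h
  have invLA : ∀ v ∈ LA, qv⁻¹ • v ∈ LA := fun v hv => by
    have h := hLAsmul _ (qv_inv_pow_mem_AA 1) v hv
    rwa [pow_one] at h
  intro x hx
  obtain ⟨m, hm⟩ := clear_pow A0 qv qv_pow_mem_A0 scalar_A0 L0 hL0zero hL0add hL0smul hspan0 x
  obtain ⟨r, hr0, hrx⟩ := clearA LA hLAzero hLAadd hLAsmul hspanA x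
  set rr := amap r with hrrdef
  have hrr : rr ≠ 0 := amap_ne hr0
  set d := r.natDegree with hd
  set n := m + d with hn
  set u := qv ^ m * rr with hudef
  have hu : u ≠ 0 := mul_ne_zero (pow_ne_zero _ qv_ne) hrr
  have hyL0 : u • x ∈ L0 := by
    have h1 : u • x = rr • (qv ^ m • x) := by rw [smul_smul, mul_comm]
    rw [h1]; exact hL0smul _ (poly_mem_A0 r) _ hm
  have hyLA : u • x ∈ LA := by
    have h1 : u • x = (qv ^ m) • (rr • x) := by rw [smul_smul]
    rw [h1]; exact hLAsmul _ (qv_pow_mem_AA m) _ hrx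
  have hwmem : ((qv⁻¹) ^ d * rr) • x ∈ Li := hLismul _ (ratio_mem_Ainf r) _ hx
  have hyw : u • x = qv ^ n • (((qv⁻¹) ^ d * rr) • x) := by
    rw [smul_smul]
    congr 1
    rw [hn, pow_add, inv_pow, hudef,
      show qv ^ m * qv ^ d * ((qv ^ d)⁻¹ * rr) = qv ^ m * rr * (qv ^ d * (qv ^ d)⁻¹) from by ring,
      mul_inv_cancel₀ (pow_ne_zero _ qv_ne), mul_one]
  obtain ⟨f, hf, hsum⟩ := expandGen qv qv_ne L0 Li LA (L0 ∩ Li ∩ LA)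
    (fun v h1 h2 h3 => ⟨⟨h1, h2⟩, h3⟩) (fun v hv => hv.1.2) (fun v hv => hv.2)
    hLAadd negLA invLA hLiadd negLi
    (fun k v hv => hLismul _ (qv_inv_pow_mem_Ainf k) v hv)
    h1b n (u • x) _ hyL0 hyLA hwmem hyw
  set γ := r.leadingCoeff⁻¹ with hγ
  set B := qv * (qv ^ d * rr⁻¹ - Pc γ) with hBdef
  have hBmem : B ∈ Ainf := by
    refine mem_Ainf (X * (X ^ d - Polynomial.C γ * r)) r hr0 (deg_aux r hr0) ?_
    have hrhs : amap (X * (X ^ d - Polynomial.C γ * r)) = qv * (qv ^ d - Pc γ * rr) := by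
      rw [map_mul, map_sub, map_pow, map_mul, ← qv_eq]; rfl
    rw [hrhs, hBdef, mul_assoc, sub_mul, mul_assoc (qv ^ d), inv_mul_cancel₀ hrr, mul_one]
  have hgk : ∀ k, k < n → (qv ^ (k + 1) * u⁻¹) ∈ Ainf := by
    intro k hk
    refine mem_Ainf (X ^ (k + 1)) (X ^ m * r)
      (mul_ne_zero (pow_ne_zero _ X_ne_zero) hr0) ?_ ?_
    · rw [degree_mul, degree_X_pow, degree_X_pow, degree_eq_natDegree hr0, ← hd]
      calc ((k + 1 : ℕ) : WithBot ℕ) ≤ ((m + d : ℕ) : WithBot ℕ) := by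
            exact_mod_cast by omega
        _ = (m : WithBot ℕ) + d := by push_cast; ring
    · have hXmr : amap (X ^ m * r) = u := by
        rw [map_mul, map_pow, ← qv_eq, hudef]
      rw [hXmr, map_pow, ← qv_eq, mul_assoc, inv_mul_cancel₀ hu, mul_one]
  refine ⟨Pc γ • f n,
    ⟨⟨hL0smul _ (Pc_mem_A0 γ) _ (hf n).1.1, hLismul _ (Pc_mem_Ainf γ) _ (hf n).1.2⟩,
      hLAsmul _ (Pc_mem_AA γ) _ (hf n).2⟩,
    (∑ k ∈ Finset.range n, (qv ^ (k + 1) * u⁻¹) • f k) + B • f n, ?_, ?_⟩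
  · refine hLiadd _ ?_ _ (hLismul _ hBmem _ (hf n).1.2)
    exact sum_mem_set Li hLizero hLiadd _ _
      (fun k hk => hLismul _ (hgk k (Finset.mem_range.mp hk)) _ (hf k).1.2)
  · have hxeq : x = ∑ k ∈ Finset.range (n + 1), (qv ^ k * u⁻¹) • f k := by
      have h1 : u⁻¹ • (u • x) = x := by rw [smul_smul, inv_mul_cancel₀ hu, one_smul]
      rw [← h1, hsum, Finset.smul_sum]
      refine Finset.sum_congr rfl fun k _ => ?_
      rw [smul_smul, mul_comm]
    rw [Finset.sum_range_succ] at hxeq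
    have hterm : ∀ k, qv⁻¹ * (qv ^ (k + 1) * u⁻¹) = qv ^ k * u⁻¹ := fun k => by
      rw [pow_succ', mul_assoc, inv_mul_cancel_left₀ qv_ne]
    have hcn : qv ^ n * u⁻¹ = qv ^ d * rr⁻¹ := by
      rw [hn, hudef, pow_add, mul_inv, mul_comm (qv ^ m) (qv ^ d), mul_assoc,
        ← mul_assoc (qv ^ m), mul_inv_cancel₀ (pow_ne_zero _ qv_ne), one_mul]
    have hBn : qv⁻¹ * B = qv ^ n * u⁻¹ - Pc γ := by
      rw [hBdef, inv_mul_cancel_left₀ qv_ne, hcn]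
    calc x - Pc γ • f n
        = ∑ k ∈ Finset.range n, (qv ^ k * u⁻¹) • f k + (qv ^ n * u⁻¹ - Pc γ) • f n := by
          rw [hxeq, sub_smul]; abel
      _ = qv⁻¹ • ((∑ k ∈ Finset.range n, (qv ^ (k + 1) * u⁻¹) • f k) + B • f n) := by
          rw [smul_add, Finset.smul_sum]
          congr 1
          · exact Finset.sum_congr rfl fun k _ => by rw [smul_smul, hterm]
          · rw [smul_smul, hBn]
end Modules

section Modules2
variable {V : Type*} [AddCommGroup V] [Module Kq V]

lemma surj_dir2 (L0 Li LA : Set V)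
    (hL0zero : (0 : V) ∈ L0) (hLizero : (0 : V) ∈ Li) (hLAzero : (0 : V) ∈ LA)
    (hL0add : ∀ v ∈ L0, ∀ w ∈ L0, v + w ∈ L0)
    (hLiadd : ∀ v ∈ Li, ∀ w ∈ Li, v + w ∈ Li)
    (hLAadd : ∀ v ∈ LA, ∀ w ∈ LA, v + w ∈ LA)
    (hL0smul : ∀ a ∈ A0, ∀ v ∈ L0, a • v ∈ L0)
    (hLismul : ∀ a ∈ Ainf, ∀ v ∈ Li, a • v ∈ Li)
    (hLAsmul : ∀ a ∈ AA, ∀ v ∈ LA, a • v ∈ LA)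
    (hspani : Submodule.span Kq Li = ⊤)
    (hspanA : Submodule.span Kq LA = ⊤)
    (h2b : ∀ x ∈ Li, ∃ e ∈ L0 ∩ Li ∩ LA, ∃ w ∈ Li, x - e = qv⁻¹ • w) :
    ∀ x ∈ L0, ∃ e ∈ L0 ∩ Li ∩ LA, ∃ w ∈ L0, x - e = qv • w := by
  have negLA : ∀ v ∈ LA, -v ∈ LA := fun v hv => by
    have h := hLAsmul _ (Pc_mem_AA (-1)) v hv
    rwa [Pc_neg_one, neg_one_smul] at h
  have negL0 : ∀ v ∈ L0, -v ∈ L0 := fun v hv => by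
    have h := hL0smul _ (Pc_mem_A0 (-1)) v hv
    rwa [Pc_neg_one, neg_one_smul] at h
  have invLA' : ∀ v ∈ LA, (qv⁻¹)⁻¹ • v ∈ LA := fun v hv => by
    rw [inv_inv]
    have h := hLAsmul _ (qv_pow_mem_AA 1) v hv
    rwa [pow_one] at h
  have hqi : (qv : Kq)⁻¹ ≠ 0 := inv_ne_zero qv_ne
  intro x hx
  obtain ⟨m, hm⟩ := clear_pow Ainf qv⁻¹ qv_inv_pow_mem_Ainf scalar_Ainf Li hLizero hLiadd
    hLismul hspani x
  obtain ⟨r₁, hr₁, hrx₁⟩ := clearA LA hLAzero hLAadd hLAsmul hspanA x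
  obtain ⟨r, hr0, hrx⟩ := stripX LA hLAsmul hr₁ hrx₁
  have hrne : r ≠ 0 := fun h => hr0 (by simp [h])
  set rr := amap r with hrrdef
  have hrr : rr ≠ 0 := amap_ne hrne
  set D := r.natDegree with hD
  set n := m + D with hn
  set u := (qv⁻¹) ^ n * rr with hudef
  have hu : u ≠ 0 := mul_ne_zero (pow_ne_zero _ hqi) hrr
  have hyLi : u • x ∈ Li := by
    have h1 : u • x = ((qv⁻¹) ^ D * rr) • ((qv⁻¹) ^ m • x) := by
      rw [smul_smul]
      congr 1
      rw [hudef, hn, pow_add]; ring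
    rw [h1]
    exact hLismul _ (ratio_mem_Ainf r) _ hm
  have hyLA : u • x ∈ LA := by
    have h1 : u • x = ((qv⁻¹) ^ n) • (rr • x) := by rw [smul_smul]
    rw [h1]; exact hLAsmul _ (qv_inv_pow_mem_AA n) _ hrx
  have hw0 : rr • x ∈ L0 := hL0smul _ (poly_mem_A0 r) _ hx
  have hyw : u • x = (qv⁻¹) ^ n • (rr • x) := by rw [smul_smul]
  obtain ⟨f, hf, hsum⟩ := expandGen qv⁻¹ hqi Li L0 LA (L0 ∩ Li ∩ LA)
    (fun v h1 h2 h3 => ⟨⟨h2, h1⟩, h3⟩) (fun v hv => hv.1.1) (fun v hv => hv.2)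
    hLAadd negLA invLA' hL0add negL0
    (fun k v hv => by
      rw [inv_inv]
      exact hL0smul _ (qv_pow_mem_A0 k) v hv)
    h2b n (u • x) _ hyLi hyLA hw0 hyw
  set γ := (r.eval 0)⁻¹ with hγdef
  have hcoeff : (1 - Polynomial.C γ * r).coeff 0 = 0 := by
    rw [coeff_sub, coeff_one_zero, coeff_C_mul, coeff_zero_eq_eval_zero, hγdef,
      inv_mul_cancel₀ hr0, sub_self]
  obtain ⟨s, hs⟩ := (Polynomial.X_dvd_iff).mpr hcoeff
  set b := amap s * rr⁻¹ with hbdef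
  have hbmem : b ∈ A0 := mem_A0 s r hr0
    (by rw [hbdef, mul_assoc, inv_mul_cancel₀ hrr, mul_one])
  have hdec : rr⁻¹ = Pc γ + qv * b := by
    have h1 : (Pc γ + qv * b) * rr = 1 := by
      rw [hbdef]
      calc (Pc γ + qv * (amap s * rr⁻¹)) * rr
          = Pc γ * rr + qv * amap s * (rr⁻¹ * rr) := by ring
        _ = Pc γ * rr + qv * amap s := by rw [inv_mul_cancel₀ hrr, mul_one]
        _ = amap (Polynomial.C γ * r + X * s) := by
            rw [map_add, map_mul, map_mul, ← qv_eq]; rfl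
        _ = 1 := by
            rw [show Polynomial.C γ * r + X * s = 1 from by linear_combination -hs, map_one]
    exact inv_eq_of_mul_eq_one_left h1
  have huinv : u⁻¹ = qv ^ n * rr⁻¹ := by
    rw [hudef, mul_inv, inv_pow, inv_inv]
  have hgkmem : ∀ k, qv ^ (n - 1 - k) * rr⁻¹ ∈ A0 := fun k =>
    mem_A0 (X ^ (n - 1 - k)) r hr0
      (by rw [mul_assoc, inv_mul_cancel₀ hrr, mul_one, map_pow, ← qv_eq])
  have hxeq : x = ∑ k ∈ Finset.range (n + 1), ((qv⁻¹) ^ k * u⁻¹) • f k := by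
    have h1 : u⁻¹ • (u • x) = x := by rw [smul_smul, inv_mul_cancel₀ hu, one_smul]
    rw [← h1, hsum, Finset.smul_sum]
    exact Finset.sum_congr rfl fun k _ => by rw [smul_smul, mul_comm]
  rw [Finset.sum_range_succ] at hxeq
  have hterm : ∀ k, k < n → (qv⁻¹) ^ k * u⁻¹ = qv * (qv ^ (n - 1 - k) * rr⁻¹) := by
    intro k hk
    obtain ⟨j, hj⟩ : ∃ j, n = k + (j + 1) := ⟨n - k - 1, by omega⟩
    have hjk : n - 1 - k = j := by omega
    rw [hjk, huinv, hj, pow_add, pow_succ, inv_pow,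
      show (qv ^ k)⁻¹ * (qv ^ k * (qv ^ j * qv) * rr⁻¹)
          = ((qv ^ k)⁻¹ * qv ^ k) * (qv * (qv ^ j * rr⁻¹)) from by ring,
      inv_mul_cancel₀ (pow_ne_zero _ qv_ne), one_mul]
  have hcn : (qv⁻¹) ^ n * u⁻¹ = rr⁻¹ := by
    rw [huinv, inv_pow, ← mul_assoc, inv_mul_cancel₀ (pow_ne_zero _ qv_ne), one_mul]
  refine ⟨Pc γ • f n,
    ⟨⟨hL0smul _ (Pc_mem_A0 γ) _ (hf n).1.1, hLismul _ (Pc_mem_Ainf γ) _ (hf n).1.2⟩,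
      hLAsmul _ (Pc_mem_AA γ) _ (hf n).2⟩,
    (∑ k ∈ Finset.range n, (qv ^ (n - 1 - k) * rr⁻¹) • f k) + b • f n, ?_, ?_⟩
  · refine hL0add _ ?_ _ (hL0smul _ hbmem _ (hf n).1.1)
    exact sum_mem_set L0 hL0zero hL0add _ _
      (fun k _ => hL0smul _ (hgkmem k) _ (hf k).1.1)
  · calc x - Pc γ • f n
        = ∑ k ∈ Finset.range n, ((qv⁻¹) ^ k * u⁻¹) • f k
            + ((qv⁻¹) ^ n * u⁻¹ - Pc γ) • f n := by
          rw [hxeq, sub_smul]; abel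
      _ = qv • ((∑ k ∈ Finset.range n, (qv ^ (n - 1 - k) * rr⁻¹) • f k) + b • f n) := by
          rw [smul_add, Finset.smul_sum]
          congr 1
          · exact Finset.sum_congr rfl fun k hk => by
              rw [smul_smul, ← hterm k (Finset.mem_range.mp hk)]
          · rw [smul_smul]
            congr 1
            rw [hcn, hdec]
            ring
end Modules2

/-- Equivalence of two of the conditions defining a balanced triple: for
lattices `L₀` (over `A₀`), `L∞` (over `A_∞`) and `V_A` (over `A = ℚ[q^{±1}]`),
each generating `V` over `ℚ(q)`, with `E = L₀ ∩ L∞ ∩ V_A`, the natural map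
`E → L₀/qL₀` is an isomorphism of `ℚ`-vector spaces iff the natural map
`E → L∞/q⁻¹L∞` is. -/
theorem stmt_13 {V : Type*} [AddCommGroup V] [Module Kq V]
    (L0 Li LA : Set V)
    (hL0zero : (0 : V) ∈ L0) (hLizero : (0 : V) ∈ Li) (hLAzero : (0 : V) ∈ LA)
    (hL0add : ∀ v ∈ L0, ∀ w ∈ L0, v + w ∈ L0)
    (hLiadd : ∀ v ∈ Li, ∀ w ∈ Li, v + w ∈ Li)
    (hLAadd : ∀ v ∈ LA, ∀ w ∈ LA, v + w ∈ LA)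
    (hL0smul : ∀ a ∈ A0, ∀ v ∈ L0, a • v ∈ L0)
    (hLismul : ∀ a ∈ Ainf, ∀ v ∈ Li, a • v ∈ Li)
    (hLAsmul : ∀ a ∈ AA, ∀ v ∈ LA, a • v ∈ LA)
    (hspan0 : Submodule.span Kq L0 = ⊤)
    (hspani : Submodule.span Kq Li = ⊤)
    (hspanA : Submodule.span Kq LA = ⊤)
    (E : Set V) (hE : E = L0 ∩ Li ∩ LA) :
    -- `E → L₀/qL₀` bijective (kernel-trivial and surjective)
    ((∀ v ∈ E, (∃ w ∈ L0, v = qv • w) → v = 0) ∧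
      (∀ x ∈ L0, ∃ e ∈ E, ∃ w ∈ L0, x - e = qv • w)) ↔
    -- `E → L∞/q⁻¹L∞` bijective
    ((∀ v ∈ E, (∃ w ∈ Li, v = qv⁻¹ • w) → v = 0) ∧
      (∀ x ∈ Li, ∃ e ∈ E, ∃ w ∈ Li, x - e = qv⁻¹ • w)) := by
  subst hE
  have hqv1A0 : qv ∈ A0 := by have := qv_pow_mem_A0 1; rwa [pow_one] at this
  have hqv1AA : qv ∈ AA := by have := qv_pow_mem_AA 1; rwa [pow_one] at this
  have hqvi1AA : qv⁻¹ ∈ AA := by have := qv_inv_pow_mem_AA 1; rwa [pow_one] at this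
  have hqvi1Ainf : qv⁻¹ ∈ Ainf := by have := qv_inv_pow_mem_Ainf 1; rwa [pow_one] at this
  constructor
  · rintro ⟨h1a, h1b⟩
    constructor
    · rintro v hv ⟨w, hw, hvw⟩
      have hqvv : qv • v ∈ L0 ∩ Li ∩ LA := by
        refine ⟨⟨hL0smul _ hqv1A0 _ hv.1.1, ?_⟩, hLAsmul _ hqv1AA _ hv.2⟩
        have : qv • v = w := by
          rw [hvw, smul_smul, mul_inv_cancel₀ qv_ne, one_smul]
        rw [this]; exact hw
      have h0 : qv • v = 0 := h1a _ hqvv ⟨v, hv.1.1, rfl⟩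
      have := smul_eq_zero.mp h0
      have hqne := qv_ne
      tauto
    · exact surj_dir1 L0 Li LA hL0zero hLizero hLAzero hL0add hLiadd hLAadd
        hL0smul hLismul hLAsmul hspan0 hspanA h1b
  · rintro ⟨h2a, h2b⟩
    constructor
    · rintro v hv ⟨w, hw, hvw⟩
      have hqvv : qv⁻¹ • v ∈ L0 ∩ Li ∩ LA := by
        refine ⟨⟨?_, hLismul _ hqvi1Ainf _ hv.1.2⟩, hLAsmul _ hqvi1AA _ hv.2⟩
        have : qv⁻¹ • v = w := by
          rw [hvw, smul_smul, inv_mul_cancel₀ qv_ne, one_smul]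
        rw [this]; exact hw
      have h0 : qv⁻¹ • v = 0 := h2a _ hqvv ⟨v, hv.1.2, rfl⟩
      have := smul_eq_zero.mp h0
      have hne : (qv : Kq)⁻¹ ≠ 0 := inv_ne_zero qv_ne
      tauto
    · exact surj_dir2 L0 Li LA hL0zero hLizero hLAzero hL0add hLiadd hLAadd
        hL0smul hLismul hLAsmul hspani hspanA h2b
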